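/- Let 0 < r_1 < r_2 < r_3 with r_2(r_3−r_1)³ − r_1(r_3+r_2)³ − r_3(r_1+r_2)³ > 0. Then the point (π, 0) is a strict local minimum of f(α,β) = F_{12}(α) + F_{13}(β) + F_{23}(α−β), where F_{ij}(θ) = (r_i² + r_j² − 2 r_i r_j cos θ)^{−1/2}. -/

import Mathlib

/-!
Since `t ↦ t^(-1/2)` is convex, each pair term is bounded below by its tangent line in the squared
distance, taken at the configuration `(π, 0)`. Writing `(α, β) = (π + x, y)`, this gives
`f(α, β) - f(π, 0) ≥ P (1 - cos x) + E (1 - cos (x - y)) - D (1 - cos y)` with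
`P = r₁r₂/(r₁+r₂)³`, `E = r₂r₃/(r₂+r₃)³`, `D = r₁r₃/(r₃-r₁)³`. Up to quartic errors the right side is
`(P x² + E (x - y)² - D y²)/2`, a quadratic form that is positive definite iff `D (P + E) < P E`;
clearing denominators, this is the polynomial condition.
-/

open Real Filter Topology

noncomputable def pairPotential (a b θ : ℝ) : ℝ := 1 / √(a ^ 2 + b ^ 2 - 2 * a * b * cos θ)

lemma one_div_sqrt_tangent_le {c s : ℝ} (hc : 0 < c) (hs : 0 < s) :
    1 / √s - (c - s) / (2 * s * √s) ≤ 1 / √c := by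
  obtain ⟨a, ha, rfl⟩ : ∃ a, 0 < a ∧ a ^ 2 = c := ⟨√c, sqrt_pos.2 hc, sq_sqrt hc.le⟩
  obtain ⟨b, hb, rfl⟩ : ∃ b, 0 < b ∧ b ^ 2 = s := ⟨√s, sqrt_pos.2 hs, sq_sqrt hs.le⟩
  rw [sqrt_sq ha.le, sqrt_sq hb.le, ← sub_nonneg]
  have key : 1 / a - (1 / b - (a ^ 2 - b ^ 2) / (2 * b ^ 2 * b))
      = (b - a) ^ 2 * (2 * b + a) / (2 * a * b ^ 3) := by
    field_simp; ring
  rw [key]; positivity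

lemma pairPotential_ge_tangent {a b s : ℝ} (ha : 0 < a) (hb : 0 < b) (hab : a ≠ b) (hs : 0 < s)
    (θ : ℝ) :
    1 / √s - (a ^ 2 + b ^ 2 - 2 * a * b * cos θ - s) / (2 * s * √s) ≤ pairPotential a b θ := by
  have hd : 0 < a ^ 2 + b ^ 2 - 2 * a * b * cos θ := by
    nlinarith [mul_nonneg (mul_pos ha hb).le (sub_nonneg.2 (cos_le_one θ)),
      sq_pos_of_ne_zero (sub_ne_zero.2 hab)]
  exact one_div_sqrt_tangent_le hd hs

lemma pairPotential_ge_antiparallel {a b : ℝ} (ha : 0 < a) (hb : 0 < b) (hab : a ≠ b) (θ : ℝ) :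
    1 / (a + b) + a * b / (a + b) ^ 3 * (1 + cos θ) ≤ pairPotential a b θ := by
  have h := pairPotential_ge_tangent ha hb hab (pow_pos (add_pos ha hb) 2) θ
  rw [sqrt_sq (add_pos ha hb).le] at h
  convert h using 2
  field_simp; ring

lemma pairPotential_ge_parallel {a b : ℝ} (ha : 0 < a) (hab : a < b) (θ : ℝ) :
    1 / (b - a) - a * b / (b - a) ^ 3 * (1 - cos θ) ≤ pairPotential a b θ := by
  have hba : 0 < b - a := sub_pos.2 hab
  have h := pairPotential_ge_tangent ha (ha.trans hab) hab.ne (pow_pos hba 2) θ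
  rw [sqrt_sq hba.le] at h
  convert h using 2
  field_simp; ring

lemma pairPotential_pi {a b : ℝ} (ha : 0 < a) (hb : 0 < b) : pairPotential a b π = 1 / (a + b) := by
  rw [pairPotential, cos_pi, show a ^ 2 + b ^ 2 - 2 * a * b * -1 = (a + b) ^ 2 by ring,
    sqrt_sq (add_pos ha hb).le]

lemma pairPotential_zero {a b : ℝ} (hab : a < b) : pairPotential a b 0 = 1 / (b - a) := by
  rw [pairPotential, cos_zero, show a ^ 2 + b ^ 2 - 2 * a * b * 1 = (b - a) ^ 2 by ring,
    sqrt_sq (sub_pos.2 hab).le]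

lemma mul_sq_div_two_le_one_sub_cos {t η : ℝ} (hη : η ≤ 1) (ht : t ^ 2 ≤ η) :
    (1 - η) * (t ^ 2 / 2) ≤ 1 - cos t := by
  have ht1 : |t| ≤ 1 := by
    rw [← sq_le_one_iff_abs_le_one]; linarith
  have h := (abs_le.1 (cos_bound ht1)).2
  rw [pow_abs, abs_of_nonneg (by positivity)] at h
  nlinarith [mul_le_mul_of_nonneg_left ht (sq_nonneg t)]

lemma quadratic_form_pos {a b c x y : ℝ} (ha : 0 < a) (hb : 0 < b) (hc : c * (a + b) < a * b)
    (hxy : (x, y) ≠ 0) : 0 < a * x ^ 2 + b * (x - y) ^ 2 - c * y ^ 2 := by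
  have hsq : (a + b) * (a * x ^ 2 + b * (x - y) ^ 2 - c * y ^ 2)
      = ((a + b) * x - b * y) ^ 2 + (a * b - c * (a + b)) * y ^ 2 := by ring
  refine pos_of_mul_pos_right ?_ (add_pos ha hb).le
  rw [hsq]
  rcases eq_or_ne y 0 with rfl | hy
  · have hx : x ≠ 0 := fun hx => hxy (by simp [hx])
    simp only [mul_zero, sub_zero]
    positivity
  · exact add_pos_of_nonneg_of_pos (sq_nonneg _) (mul_pos (sub_pos.2 hc) (by positivity))

lemma eventually_pos_cos_form {P E D : ℝ} (hP : 0 < P) (hE : 0 < E) (hD : 0 ≤ D)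
    (hdet : D * (P + E) < P * E) :
    ∀ᶠ v in 𝓝[≠] (0 : ℝ × ℝ),
      0 < P * (1 - cos v.1) + E * (1 - cos (v.1 - v.2)) - D * (1 - cos v.2) := by
  set η := (P * E - D * (P + E)) / (2 * (P * E)) with hη
  have hPE : 0 < P * E := mul_pos hP hE
  have hη0 : 0 < η := div_pos (sub_pos.2 hdet) (by positivity)
  have hη1 : η < 1 := by
    rw [hη, div_lt_one (by positivity)]; nlinarith [mul_nonneg hD (add_pos hP hE).le]
  have hdet' : D * ((1 - η) * P + (1 - η) * E) < (1 - η) * P * ((1 - η) * E) := by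
    have : D * (P + E) < (1 - η) * (P * E) := by
      rw [hη]; field_simp; linarith
    nlinarith [sub_pos.2 hη1]
  have hsmall : ∀ᶠ v in 𝓝 (0 : ℝ × ℝ), v.1 ^ 2 ≤ η ∧ (v.1 - v.2) ^ 2 ≤ η := by
    refine ((Continuous.tendsto' ?_ 0 0 ?_).eventually_le_const hη0).and
      ((Continuous.tendsto' ?_ 0 0 ?_).eventually_le_const hη0) <;> first | fun_prop | simp
  filter_upwards [eventually_nhdsWithin_of_eventually_nhds hsmall, self_mem_nhdsWithin]
    with v ⟨hx, hxy⟩ hv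
  have hq := quadratic_form_pos (mul_pos (sub_pos.2 hη1) hP) (mul_pos (sub_pos.2 hη1) hE)
    hdet' (x := v.1) (y := v.2) hv
  linarith [mul_le_mul_of_nonneg_left (mul_sq_div_two_le_one_sub_cos hη1.le hx) hP.le,
    mul_le_mul_of_nonneg_left (mul_sq_div_two_le_one_sub_cos hη1.le hxy) hE.le,
    mul_le_mul_of_nonneg_left (one_sub_sq_div_two_le_cos (x := v.2)) hD]

lemma hessian_det_pos_of_polynomial_condition {r1 r2 r3 : ℝ} (h1 : 0 < r1) (h12 : r1 < r2) (h23 : r2 < r3)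
    (h : r2 * (r3 - r1) ^ 3 - r1 * (r3 + r2) ^ 3 - r3 * (r1 + r2) ^ 3 > 0) :
    r1 * r3 / (r3 - r1) ^ 3 * (r1 * r2 / (r1 + r2) ^ 3 + r2 * r3 / (r2 + r3) ^ 3)
      < r1 * r2 / (r1 + r2) ^ 3 * (r2 * r3 / (r2 + r3) ^ 3) := by
  have h2 : 0 < r2 := h1.trans h12
  have h3 : 0 < r3 := h2.trans h23
  have h31 : 0 < r3 - r1 := by linarith
  rw [← sub_pos]
  have key : r1 * r2 / (r1 + r2) ^ 3 * (r2 * r3 / (r2 + r3) ^ 3)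
      - r1 * r3 / (r3 - r1) ^ 3 * (r1 * r2 / (r1 + r2) ^ 3 + r2 * r3 / (r2 + r3) ^ 3)
      = r1 * r2 * r3 * (r2 * (r3 - r1) ^ 3 - r1 * (r3 + r2) ^ 3 - r3 * (r1 + r2) ^ 3)
        / ((r1 + r2) ^ 3 * (r2 + r3) ^ 3 * (r3 - r1) ^ 3) := by
    field_simp; ring
  rw [key]; positivity

theorem stmt_9 (r1 r2 r3 : ℝ) (h1 : 0 < r1) (h12 : r1 < r2) (h23 : r2 < r3)
    (h : r2 * (r3 - r1)^3 - r1 * (r3 + r2)^3 - r3 * (r1 + r2)^3 > 0) :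
    let F : ℝ → ℝ → ℝ → ℝ := fun ri rj θ =>
      1 / Real.sqrt (ri^2 + rj^2 - 2 * ri * rj * Real.cos θ)
    let f : ℝ × ℝ → ℝ := fun p => F r1 r2 p.1 + F r1 r3 p.2 + F r2 r3 (p.1 - p.2)
    ∃ ε > 0, ∀ p : ℝ × ℝ, p ≠ (Real.pi, 0) → ‖p - (Real.pi, 0)‖ < ε →
      f (Real.pi, 0) < f p := by
  intro F f
  have h2 : 0 < r2 := h1.trans h12
  have h3 : 0 < r3 := h2.trans h23
  have h13 : r1 < r3 := h12.trans h23
  obtain ⟨ε, hε, hball⟩ := Metric.eventually_nhds_iff.1 <| eventually_nhdsWithin_iff.1 <|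
    eventually_pos_cos_form (by positivity) (by positivity) (div_pos (by positivity) (pow_pos
      (sub_pos.2 h13) 3)).le (hessian_det_pos_of_polynomial_condition h1 h12 h23 h)
  refine ⟨ε, hε, fun p hp hpε => ?_⟩
  have hpos := hball (y := p - (π, 0)) (by rwa [dist_zero_right]) (sub_ne_zero.2 hp)
  rw [Prod.fst_sub, Prod.snd_sub, sub_zero, cos_sub_pi, show p.1 - π - p.2 = p.1 - p.2 - π by ring,
    cos_sub_pi] at hpos
  change pairPotential r1 r2 π + pairPotential r1 r3 0 + pairPotential r2 r3 (π - 0)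
    < pairPotential r1 r2 p.1 + pairPotential r1 r3 p.2 + pairPotential r2 r3 (p.1 - p.2)
  rw [sub_zero, pairPotential_pi h1 h2, pairPotential_zero h13, pairPotential_pi h2 h3]
  linarith [pairPotential_ge_antiparallel h1 h2 h12.ne p.1, pairPotential_ge_parallel h1 h13 p.2,
    pairPotential_ge_antiparallel h2 h3 h23.ne (p.1 - p.2)]
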